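/- Let Δ ∈ ℝ^{L×n×n} be a tensor, let W ∈ ℝ^{L×M} have orthonormal columns, and for each m ∈ {1,…,M} let U_m ∈ ℝ^{n×K_m} have orthonormal columns with Π_{U_m⊥} = I − U_mU_mᵀ. Define D ∈ ℝ^{M×n×n} by D(m) = Σ_l W(l,m) Δ(l), and Π_{T,K}(D) ∈ ℝ^{M×n×n} by [Π_{T,K}(D)](m) = D(m) − Π_{U_m⊥} D(m) Π_{U_m⊥}; also, for a tensor X ∈ ℝ^{L×n×n}, let Π_{T,K_m}(X) have slices X(l) − Π_{U_m⊥} X(l) Π_{U_m⊥}. Then ‖Δ ×_{2,3} Π_{T,K}(D)‖_F ≤ √M · max_{1≤m≤M} ‖Π_{T,K_m}(Δ) ×_{2,3} Π_{T,K_m}(Δ)‖, where the left-hand side is the Frobenius norm of an L×M matrix and the right-hand side involves spectral norms of L×L matrices. -/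

import Mathlib

/-!
The slice map `Y ↦ Y − P Y P` is an orthogonal projection for the trace inner product whenever
`P = I − U Uᵀ` is an orthogonal projection. Hence, with `D(m) = Σ_l W(l,m) Δ(l)`, the `m`-th column
of `Δ ×_{2,3} Π_{T,K}(D)` equals `G_m w_m`, where `G_m = Π_{T,K_m}(Δ) ×_{2,3} Π_{T,K_m}(Δ)` and
`w_m` is the (unit) `m`-th column of `W`. Each column therefore has norm at most `‖G_m‖`, and
summing the squares of the `M` columns gives the factor `√M`.
-/

open Matrix BigOperators

/-- Frobenius norm of a real matrix. -/
noncomputable def frobNorm {a b : ℕ} (X : Matrix (Fin a) (Fin b) ℝ) : ℝ :=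
  Real.sqrt (∑ i, ∑ j, (X i j) ^ 2)

/-- Spectral (operator) norm of a real matrix. -/
noncomputable def specNorm {a b : ℕ} (X : Matrix (Fin a) (Fin b) ℝ) : ℝ :=
  ‖LinearMap.toContinuousLinearMap (Matrix.toEuclideanLin X)‖

/-- Mode-1 product of a tensor `X ∈ ℝ^{J×n×n}` with `B ∈ ℝ^{J'×J}`:
`(X ×₁ B)(j') = Σ_j B(j',j) X(j)`. -/
noncomputable def mode1 {J J' n : ℕ} (X : Fin J → Matrix (Fin n) (Fin n) ℝ)
    (B : Matrix (Fin J') (Fin J) ℝ) : Fin J' → Matrix (Fin n) (Fin n) ℝ :=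
  fun j' => ∑ j, B j' j • X j

/-- Mode-(2,3) product: `(X ×_{2,3} Y)(i,j) = Tr(X(i) Y(j)ᵀ)`. -/
noncomputable def prod23 {J J' n : ℕ} (X : Fin J → Matrix (Fin n) (Fin n) ℝ)
    (Y : Fin J' → Matrix (Fin n) (Fin n) ℝ) : Matrix (Fin J) (Fin J') ℝ :=
  Matrix.of fun i j => ((X i) * (Y j)ᵀ).trace

/-- Frobenius norm of a tensor. -/
noncomputable def tFrobNorm {J n : ℕ} (X : Fin J → Matrix (Fin n) (Fin n) ℝ) : ℝ :=
  Real.sqrt (∑ j, ∑ a, ∑ b, (X j a b) ^ 2)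

/-- Tensor operator norm:
`‖X‖ = sup{Σ_{j,a,b} X(j,a,b) u_j v_a w_b : ‖u‖=‖v‖=‖w‖=1}`. -/
noncomputable def tOpNorm {J n : ℕ} (X : Fin J → Matrix (Fin n) (Fin n) ℝ) : ℝ :=
  sSup { c | ∃ (u : EuclideanSpace ℝ (Fin J)) (v w : EuclideanSpace ℝ (Fin n)),
    ‖u‖ = 1 ∧ ‖v‖ = 1 ∧ ‖w‖ = 1 ∧ c = ∑ j, ∑ a, ∑ b, X j a b * u j * v a * w b }

/-- Slice-wise projection `X(j) ↦ X(j) − P X(j) P` applied to every slice of a tensor. -/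
noncomputable def piT {J n : ℕ} (P : Matrix (Fin n) (Fin n) ℝ)
    (X : Fin J → Matrix (Fin n) (Fin n) ℝ) : Fin J → Matrix (Fin n) (Fin n) ℝ :=
  fun j => X j - P * X j * P

theorem transpose_one_sub_mul_transpose {ι κ R : Type*} [Fintype κ] [DecidableEq ι] [CommRing R]
    (U : Matrix ι κ R) : (1 - U * Uᵀ)ᵀ = 1 - U * Uᵀ := by
  rw [transpose_sub, transpose_one, transpose_mul, transpose_transpose]

theorem isIdempotentElem_one_sub_mul_transpose {ι κ R : Type*} [Fintype ι] [Fintype κ]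
    [DecidableEq ι] [DecidableEq κ] [CommRing R] {U : Matrix ι κ R} (hU : Uᵀ * U = 1) :
    IsIdempotentElem (1 - U * Uᵀ) := by
  refine IsIdempotentElem.one_sub ?_
  change U * Uᵀ * (U * Uᵀ) = U * Uᵀ
  rw [Matrix.mul_assoc, ← Matrix.mul_assoc Uᵀ, hU, Matrix.one_mul]

theorem trace_mul_transpose_sub_conj {ι R : Type*} [Fintype ι] [CommRing R]
    {P : Matrix ι ι R} (hPs : Pᵀ = P) (hP : IsIdempotentElem P) (X Y : Matrix ι ι R) :
    (X * (Y - P * Y * P)ᵀ).trace = ((X - P * X * P) * (Y - P * Y * P)ᵀ).trace := by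
  have hYt : (Y - P * Y * P)ᵀ = Yᵀ - P * Yᵀ * P := by
    rw [transpose_sub, transpose_mul, transpose_mul, hPs, Matrix.mul_assoc]
  have hPZP : P * (Yᵀ - P * Yᵀ * P) * P = 0 := by
    have hPP : P * P = P := hP
    rw [show P * (Yᵀ - P * Yᵀ * P) * P = P * Yᵀ * P - (P * P) * Yᵀ * (P * P) by noncomm_ring,
      hPP, sub_self]
  have hvanish : (P * X * P * (Yᵀ - P * Yᵀ * P)).trace = 0 := by
    rw [show P * X * P * (Yᵀ - P * Yᵀ * P) = P * (X * (P * (Yᵀ - P * Yᵀ * P))) by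
        simp only [Matrix.mul_assoc],
      trace_mul_comm, Matrix.mul_assoc, hPZP, Matrix.mul_zero, trace_zero]
  rw [hYt, Matrix.sub_mul, trace_sub, hvanish, sub_zero]

theorem sum_smul_sub_conj {ι κ R : Type*} [Fintype ι] [Fintype κ] [CommRing R]
    (P : Matrix ι ι R) (X : κ → Matrix ι ι R) (w : κ → R) :
    (∑ k, w k • X k) - P * (∑ k, w k • X k) * P = ∑ k, w k • (X k - P * X k * P) := by
  simp only [Matrix.mul_sum, Matrix.sum_mul, Matrix.mul_smul, Matrix.smul_mul, smul_sub,
    Finset.sum_sub_distrib]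

theorem trace_mul_transpose_sub_conj_sum_smul {J n : ℕ} {P : Matrix (Fin n) (Fin n) ℝ}
    (hPs : Pᵀ = P) (hP : IsIdempotentElem P) (Δ : Fin J → Matrix (Fin n) (Fin n) ℝ)
    (w : Fin J → ℝ) (j : Fin J) :
    (Δ j * ((∑ k, w k • Δ k) - P * (∑ k, w k • Δ k) * P)ᵀ).trace =
      (prod23 (piT P Δ) (piT P Δ) *ᵥ w) j := by
  rw [trace_mul_transpose_sub_conj hPs hP, sum_smul_sub_conj, transpose_sum, Matrix.mul_sum,
    trace_sum]
  simp only [transpose_smul, Matrix.mul_smul, trace_smul, mulVec, dotProduct, prod23, piT, of_apply,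
    smul_eq_mul, mul_comm]

theorem sum_sq_mulVec_le_specNorm_sq {a b : ℕ} (G : Matrix (Fin a) (Fin b) ℝ) (w : Fin b → ℝ) :
    ∑ i, (G *ᵥ w) i ^ 2 ≤ specNorm G ^ 2 * ∑ j, w j ^ 2 := by
  have hle := (LinearMap.toContinuousLinearMap (toEuclideanLin G)).le_opNorm (WithLp.toLp 2 w)
  have hsq := pow_le_pow_left₀ (norm_nonneg _) hle 2
  rw [mul_pow, EuclideanSpace.norm_sq_eq, EuclideanSpace.norm_sq_eq] at hsq
  simpa only [LinearMap.coe_toContinuousLinearMap', toLpLin_toLp, toLin'_apply,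
    Real.norm_eq_abs, sq_abs, specNorm] using hsq

theorem sum_sq_apply_eq_one_of_transpose_mul_self_eq_one {ι κ : Type*} [Fintype ι]
    [DecidableEq κ] {W : Matrix ι κ ℝ} (hW : Wᵀ * W = 1) (k : κ) :
    ∑ i, W i k ^ 2 = 1 := by
  simpa [mul_apply, sq] using congrFun₂ hW k k

theorem frobNorm_le_sqrt_mul_of_sum_sq_col_le {a b : ℕ} (A : Matrix (Fin a) (Fin b) ℝ) {C : ℝ}
    (hC : 0 ≤ C) (hcol : ∀ j, ∑ i, A i j ^ 2 ≤ C ^ 2) :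
    frobNorm A ≤ √b * C :=
  calc frobNorm A = √(∑ j, ∑ i, A i j ^ 2) := by rw [frobNorm, Finset.sum_comm]
    _ ≤ √(b * C ^ 2) := Real.sqrt_le_sqrt <|
      (Finset.sum_le_sum fun j _ => hcol j).trans_eq (by simp)
    _ = √b * C := by rw [Real.sqrt_mul (Nat.cast_nonneg _), Real.sqrt_sq hC]

/-- `‖Δ ×_{2,3} Π_{T,K}(Δ ∘ W)‖_F ≤ √M · max_m ‖Π_{T,K_m}(Δ) ×_{2,3} Π_{T,K_m}(Δ)‖`. -/
theorem stmt17 {L M n : ℕ} (K : Fin M → ℕ)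
    (Δ : Fin L → Matrix (Fin n) (Fin n) ℝ)
    (W : Matrix (Fin L) (Fin M) ℝ) (hW : Wᵀ * W = 1)
    (U : ∀ m : Fin M, Matrix (Fin n) (Fin (K m)) ℝ)
    (hUo : ∀ m, (U m)ᵀ * U m = 1) :
    frobNorm (prod23 Δ (fun m =>
        (∑ l, W l m • Δ l) -
          (1 - U m * (U m)ᵀ) * (∑ l, W l m • Δ l) * (1 - U m * (U m)ᵀ))) ≤
      Real.sqrt M *
        ⨆ m : Fin M, specNorm (prod23 (piT (1 - U m * (U m)ᵀ) Δ) (piT (1 - U m * (U m)ᵀ) Δ)) := by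
  set G := fun m => prod23 (piT (1 - U m * (U m)ᵀ) Δ) (piT (1 - U m * (U m)ᵀ) Δ)
  have hG : ∀ m, specNorm (G m) ≤ ⨆ m, specNorm (G m) :=
    le_ciSup (Set.finite_range _).bddAbove
  refine frobNorm_le_sqrt_mul_of_sum_sq_col_le _ (Real.iSup_nonneg fun m => norm_nonneg _)
    fun m => ?_
  have hcol := trace_mul_transpose_sub_conj_sum_smul (transpose_one_sub_mul_transpose (U m))
    (isIdempotentElem_one_sub_mul_transpose (hUo m)) Δ (fun l => W l m)
  calc ∑ l, prod23 Δ _ l m ^ 2 = ∑ l, (G m *ᵥ fun l => W l m) l ^ 2 := by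
        simp only [prod23, of_apply, hcol, G]
    _ ≤ specNorm (G m) ^ 2 * ∑ l, W l m ^ 2 := sum_sq_mulVec_le_specNorm_sq _ _
    _ ≤ (⨆ m, specNorm (G m)) ^ 2 := by
        rw [sum_sq_apply_eq_one_of_transpose_mul_self_eq_one hW, mul_one]
        exact pow_le_pow_left₀ (norm_nonneg _) (hG m) 2
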